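/- For any based matrix T over an integral domain R, σ(T_•) = σ(T), where T_• is a primitive based matrix homologous to T; and any based matrix over R homologous to a hyperbolic based matrix is itself hyperbolic. -/

import Mathlib

/-!  Based skew-symmetric matrices over an abelian group `H`, after Turaev.
A based matrix is a triple `(G, s, b)` where `G` is a finite set, `s ∈ G`,
and `b : G × G → H` is skew-symmetric.  We realize the finite set `G` as a
finite set of natural numbers; the values of `b` outside `G` are irrelevant
(isomorphism, homology, fillings etc. only refer to values on `G`). -/

/-- The data of a based matrix over `H`: a finite carrier `G ⊆ ℕ`, a base
point `s` and a pairing `b`. -/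
structure PreBM (H : Type*) where
  /-- the underlying finite set -/
  G : Finset ℕ
  /-- the base point `s` -/
  s : ℕ
  /-- the pairing -/
  b : ℕ → ℕ → H

variable {H : Type*} [AddCommGroup H]

/-- `(G, s, b)` is a based matrix: `s ∈ G` and `b` is skew-symmetric on `G`
(with vanishing diagonal). -/
def IsBM (T : PreBM H) : Prop :=
  T.s ∈ T.G ∧ (∀ g ∈ T.G, ∀ h ∈ T.G, T.b g h = -T.b h g) ∧
    ∀ g ∈ T.G, T.b g g = 0

/-- Isomorphism of based matrices: a bijection of the carriers preserving the
base point and the pairing. -/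
def BMIso (T T' : PreBM H) : Prop :=
  ∃ f : ℕ → ℕ, Set.BijOn f (T.G : Set ℕ) (T'.G : Set ℕ) ∧ f T.s = T'.s ∧
    ∀ g ∈ T.G, ∀ h ∈ T.G, T'.b (f g) (f h) = T.b g h

/-- `g` is an annihilating element of `T`. -/
def Annihilating (T : PreBM H) (g : ℕ) : Prop :=
  g ∈ T.G ∧ g ≠ T.s ∧ ∀ h ∈ T.G, T.b g h = 0

/-- `g` is a core element of `T`. -/
def CoreElt (T : PreBM H) (g : ℕ) : Prop :=
  g ∈ T.G ∧ g ≠ T.s ∧ ∀ h ∈ T.G, T.b g h = T.b T.s h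

/-- `g₁, g₂` is a complementary pair of elements of `T`. -/
def ComplPair (T : PreBM H) (g₁ g₂ : ℕ) : Prop :=
  g₁ ∈ T.G ∧ g₂ ∈ T.G ∧ g₁ ≠ T.s ∧ g₂ ≠ T.s ∧ g₁ ≠ g₂ ∧
    ∀ h ∈ T.G, T.b g₁ h + T.b g₂ h = T.b T.s h

/-- A based matrix is primitive if it has no annihilating elements, no core
elements and no complementary pairs. -/
def Primitive (T : PreBM H) : Prop :=
  (∀ g, ¬Annihilating T g) ∧ (∀ g, ¬CoreElt T g) ∧ ∀ g₁ g₂, ¬ComplPair T g₁ g₂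

/-- Elementary extension `M₁`: adjoin one annihilating element. -/
def IsExt1 (T T' : PreBM H) : Prop :=
  T'.s = T.s ∧ ∃ g, g ∉ T.G ∧ T'.G = insert g T.G ∧
    (∀ x ∈ T.G, ∀ y ∈ T.G, T'.b x y = T.b x y) ∧
    ∀ h ∈ T'.G, T'.b g h = 0

/-- Elementary extension `M₂`: adjoin one core element. -/
def IsExt2 (T T' : PreBM H) : Prop :=
  T'.s = T.s ∧ ∃ g, g ∉ T.G ∧ T'.G = insert g T.G ∧
    (∀ x ∈ T.G, ∀ y ∈ T.G, T'.b x y = T.b x y) ∧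
    ∀ h ∈ T'.G, T'.b g h = T'.b T'.s h

/-- Elementary extension `M₃`: adjoin a pair of complementary elements. -/
def IsExt3 (T T' : PreBM H) : Prop :=
  T'.s = T.s ∧ ∃ g₁ g₂, g₁ ∉ T.G ∧ g₂ ∉ T.G ∧ g₁ ≠ g₂ ∧
    T'.G = insert g₁ (insert g₂ T.G) ∧
    (∀ x ∈ T.G, ∀ y ∈ T.G, T'.b x y = T.b x y) ∧
    ∀ h ∈ T'.G, T'.b g₁ h + T'.b g₂ h = T'.b T'.s h

/-- One elementary extension between based matrices. -/
def StepExt (T T' : PreBM H) : Prop :=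
  IsBM T ∧ IsBM T' ∧ (IsExt1 T T' ∨ IsExt2 T T' ∨ IsExt3 T T')

/-- Two based matrices are homologous if they are related by a finite
sequence of elementary extensions, inverse extensions and isomorphisms. -/
def Homologous : PreBM H → PreBM H → Prop :=
  Relation.EqvGen fun T T' => StepExt T T' ∨ (IsBM T ∧ IsBM T' ∧ BMIso T T')
variable {R : Type*} [CommRing R] [IsDomain R]

/-- `b(X, Y) = ∑_{g ∈ X, h ∈ Y} b(g, h)` for subsets `X, Y` of the carrier. -/
def bSet (T : PreBM R) (X Y : Finset ℕ) : R := ∑ g ∈ X, ∑ h ∈ Y, T.b g h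

/-- A simple filling of `T = (G, s, b)`: a finite family of disjoint subsets
of `G`, each of cardinality at most `2`, whose union is `G` and one of which
is `{s}`. -/
def IsSimpleFilling (T : PreBM R) (P : Finset (Finset ℕ)) : Prop :=
  ({T.s} : Finset ℕ) ∈ P ∧ (∀ X ∈ P, X.card ≤ 2) ∧
    (∀ X ∈ P, ∀ Y ∈ P, X ≠ Y → Disjoint X Y) ∧ P.biUnion id = T.G

/-- Half the rank of the skew-symmetric matrix `(b(X_i, X_j))_{i,j}` of a
simple filling. -/
noncomputable def sigmaFill (T : PreBM R) (P : Finset (Finset ℕ)) : ℕ :=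
  (Matrix.of fun X Y : {A // A ∈ P} => bSet T X.1 Y.1).rank / 2

/-- The genus `σ(T)` of a based matrix: the minimum of `σ(𝒳)` over all simple
fillings `𝒳` of `T`. -/
noncomputable def bmGenus (T : PreBM R) : ℕ :=
  sInf {n : ℕ | ∃ P : Finset (Finset ℕ), IsSimpleFilling T P ∧ n = sigmaFill T P}

/-- A based matrix is hyperbolic if its genus is `0`. -/
def Hyperbolic {R : Type*} [CommRing R] [IsDomain R] (T : PreBM R) : Prop :=
  bmGenus T = 0

/-! The genus is invariant under isomorphisms and under each elementary extension, hence under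
homology. An extension `T ⊂ T'` adjoins a set `D` whose block row is `0` or the row of `s`. A
filling of `T` gives one of `T'` by adding the block `D`; a filling of `T'` gives one of `T` by
merging the blocks that meet `D` and deleting `D`. Either way every block row of the new filling
is a linear combination of block rows of the old one, so by skew-symmetry the new matrix is
`Lᵀ M L` for the old matrix `M`, and its rank does not grow. -/

open Finset

section Filling

variable {R : Type*} {T : PreBM R} {P : Finset (Finset ℕ)}

theorem IsSimpleFilling.subset (hP : IsSimpleFilling T P) {X : Finset ℕ} (hX : X ∈ P) :
    X ⊆ T.G :=
  hP.2.2.2 ▸ subset_biUnion_of_mem id hX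

theorem IsSimpleFilling.pairwiseDisjoint (hP : IsSimpleFilling T P) :
    (P : Set (Finset ℕ)).PairwiseDisjoint id :=
  hP.2.2.1

theorem exists_isSimpleFilling (hs : T.s ∈ T.G) : ∃ P, IsSimpleFilling T P := by
  refine ⟨T.G.image singleton, mem_image_of_mem _ hs, by simp, ?_, ?_⟩
  · simp only [mem_image]
    rintro _ ⟨x, -, rfl⟩ _ ⟨y, -, rfl⟩ hxy
    exact disjoint_singleton.2 fun h => hxy (h ▸ rfl)
  · ext
    simp

def mergeMeeting (P : Finset (Finset ℕ)) (D : Finset ℕ) : Finset (Finset ℕ) :=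
  insert ((P.filter (¬Disjoint · D)).biUnion id \ D) (P.filter (Disjoint · D))

/-- Each block meeting `D` has at most as many points outside `D` as inside it. -/
theorem card_biUnion_not_disjoint_sdiff_le {D : Finset ℕ}
    (hdisj : (P : Set (Finset ℕ)).PairwiseDisjoint id) (hcard : ∀ X ∈ P, X.card ≤ 2) :
    ((P.filter (¬Disjoint · D)).biUnion id \ D).card ≤ D.card := by
  set Q := P.filter (¬Disjoint · D)
  have hQ : (Q : Set (Finset ℕ)).PairwiseDisjoint id :=
    hdisj.subset (coe_subset.2 (filter_subset _ _))
  calc ((Q.biUnion id) \ D).card = (Q.biUnion (· \ D)).card := by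
        congr 1
        ext
        simp only [mem_sdiff, mem_biUnion, id]
        grind
    _ ≤ ∑ X ∈ Q, (X \ D).card := card_biUnion_le
    _ ≤ ∑ X ∈ Q, (X ∩ D).card := sum_le_sum fun X hX => by
        obtain ⟨hXP, hXD⟩ := mem_filter.1 hX
        have h₁ := card_sdiff_add_card_inter X D
        have h₂ := (not_disjoint_iff_nonempty_inter.1 hXD).card_pos
        have h₃ := hcard X hXP
        omega
    _ = (Q.biUnion (· ∩ D)).card :=
        (card_biUnion (hQ.mono fun X => inter_subset_left)).symm
    _ ≤ D.card := card_le_card (biUnion_subset.2 fun X _ => inter_subset_right)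

theorem IsSimpleFilling.image {T' : PreBM R} {f : ℕ → ℕ}
    (hf : Set.BijOn f T.G T'.G) (hfs : f T.s = T'.s) (hP : IsSimpleFilling T P) :
    IsSimpleFilling T' (P.image (Finset.image f)) := by
  refine ⟨?_, ?_, ?_, ?_⟩
  · rw [← hfs, ← image_singleton]
    exact mem_image_of_mem _ hP.1
  · simp only [mem_image]
    rintro _ ⟨X, hX, rfl⟩
    exact card_image_le.trans (hP.2.1 X hX)
  · simp only [mem_image]
    rintro _ ⟨X, hX, rfl⟩ _ ⟨Y, hY, rfl⟩ hXY
    rw [← disjoint_coe, coe_image, coe_image]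
    exact (disjoint_coe.2 (hP.2.2.1 X hX Y hY fun h => hXY (h ▸ rfl))).image hf.injOn
      (coe_subset.2 (hP.subset hX)) (coe_subset.2 (hP.subset hY))
  · have : (P.biUnion id).image f = T'.G := by
      rw [← coe_inj, coe_image, hP.2.2.2]
      exact hf.image_eq
    rw [← this, image_biUnion, biUnion_image]
    rfl

theorem BMIso.symm {T' : PreBM R} (hs : T.s ∈ T.G) (h : BMIso T T') : BMIso T' T := by
  obtain ⟨f, hf, hfs, hfb⟩ := h
  have hinv := hf.invOn_invFunOn
  have hf' := hf.symm hinv.symm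
  refine ⟨Function.invFunOn f T.G, hf', ?_, fun x hx y hy => ?_⟩
  · rw [← hfs]
    exact hinv.1 hs
  · rw [← hfb _ (hf'.mapsTo hx) _ (hf'.mapsTo hy), hinv.2 hx, hinv.2 hy]

end Filling

section Rows

variable {R : Type*} [CommRing R]

/-- Restricted to `T.G`: outside the carrier `b` carries no information. -/
noncomputable def blockRow (T : PreBM R) (X : Finset ℕ) : ℕ → R :=
  ∑ g ∈ X, (T.G : Set ℕ).indicator (T.b g)

theorem blockRow_apply_of_mem (T : PreBM R) (X : Finset ℕ) {w : ℕ} (hw : w ∈ T.G) :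
    blockRow T X w = ∑ g ∈ X, T.b g w := by
  simp only [blockRow, Finset.sum_apply, Set.indicator_of_mem (Finset.mem_coe.2 hw)]

theorem blockRow_sdiff (T : PreBM R) {D U : Finset ℕ} (h : D ⊆ U) :
    blockRow T (U \ D) = blockRow T U - blockRow T D :=
  sum_sdiff_eq_sub h

theorem blockRow_biUnion (T : PreBM R) {Q : Finset (Finset ℕ)}
    (hQ : (Q : Set (Finset ℕ)).PairwiseDisjoint id) :
    blockRow T (Q.biUnion id) = ∑ X ∈ Q, blockRow T X :=
  sum_biUnion hQ

theorem bSet_eq_sum_blockRow (T : PreBM R) (X : Finset ℕ) {Y : Finset ℕ} (hY : Y ⊆ T.G) :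
    bSet T X Y = ∑ y ∈ Y, blockRow T X y := by
  rw [bSet, Finset.sum_comm]
  exact sum_congr rfl fun y hy => (blockRow_apply_of_mem T X (hY hy)).symm

theorem bSet_congr {T T' : PreBM R} (hb : ∀ x ∈ T.G, ∀ y ∈ T.G, T'.b x y = T.b x y)
    {X Y : Finset ℕ} (hX : X ⊆ T.G) (hY : Y ⊆ T.G) : bSet T' X Y = bSet T X Y :=
  sum_congr rfl fun g hg => sum_congr rfl fun h hh => hb g (hX hg) h (hY hh)

theorem bSet_antisymm {T : PreBM R} (hT : IsBM T) {X Y : Finset ℕ} (hX : X ⊆ T.G)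
    (hY : Y ⊆ T.G) : bSet T X Y = -bSet T Y X := by
  rw [bSet, bSet, Finset.sum_comm, ← sum_neg_distrib]
  exact sum_congr rfl fun h hh => by
    rw [← sum_neg_distrib]
    exact sum_congr rfl fun g hg => hT.2.1 g (hX hg) h (hY hh)

theorem sigmaFill_congr {T T' : PreBM R} (hb : ∀ x ∈ T.G, ∀ y ∈ T.G, T'.b x y = T.b x y)
    {P : Finset (Finset ℕ)} (hP : ∀ X ∈ P, X ⊆ T.G) : sigmaFill T' P = sigmaFill T P := by
  unfold sigmaFill
  congr 2
  ext X Y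
  exact bSet_congr hb (hP X X.2) (hP Y Y.2)

theorem sigmaFill_le_of_mem_span [Nontrivial R] {T : PreBM R} (hT : IsBM T)
    {P₁ P₂ : Finset (Finset ℕ)} (hP₁ : ∀ X ∈ P₁, X ⊆ T.G) (hP₂ : ∀ X ∈ P₂, X ⊆ T.G)
    (hspan : ∀ X ∈ P₂, blockRow T X ∈ Submodule.span R (blockRow T '' P₁)) :
    sigmaFill T P₂ ≤ sigmaFill T P₁ := by
  choose c hc using fun X hX =>
    (Submodule.mem_span_image_finset_iff_exists_fun' R).1 (hspan X hX)
  have hrow : ∀ X (hX : X ∈ P₂) Y, Y ⊆ T.G →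
      bSet T X Y = ∑ X' ∈ P₁, c X hX X' * bSet T X' Y := by
    intro X hX Y hY
    simp only [bSet_eq_sum_blockRow T _ hY, ← hc X hX, Finset.sum_apply, Pi.smul_apply,
      smul_eq_mul, Finset.mul_sum]
    exact Finset.sum_comm
  have hcol : ∀ X', X' ⊆ T.G → ∀ Y (hY : Y ∈ P₂),
      bSet T X' Y = ∑ Y' ∈ P₁, bSet T X' Y' * c Y hY Y' := by
    intro X' hX' Y hY
    rw [bSet_antisymm hT hX' (hP₂ Y hY), hrow Y hY X' hX', ← sum_neg_distrib]
    refine sum_congr rfl fun Y' hY' => ?_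
    rw [bSet_antisymm hT (hP₁ Y' hY') hX']
    ring
  let L : Matrix P₁ P₂ R := Matrix.of fun X' X => c X X.2 X'
  let M₁ : Matrix P₁ P₁ R := Matrix.of fun X Y => bSet T X Y
  have hM₂ : (Matrix.of fun X Y : P₂ => bSet T X Y) = L.transpose * (M₁ * L) := by
    ext X Y
    simp only [Matrix.of_apply, Matrix.mul_apply, Matrix.transpose_apply, L, M₁]
    rw [hrow X X.2 Y (hP₂ Y Y.2), ← sum_coe_sort P₁]
    refine Fintype.sum_congr _ _ fun X' => ?_
    rw [hcol X' (hP₁ X' X'.2) Y Y.2, ← sum_coe_sort P₁, mul_comm]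
  unfold sigmaFill
  rw [hM₂]
  exact Nat.div_le_div_right
    ((Matrix.rank_mul_le_right _ _).trans (Matrix.rank_mul_le_left _ _))

end Rows

section Genus

variable {R : Type*} [CommRing R] {T T' : PreBM R}

theorem bmGenus_le_of_forall_exists (hs : T.s ∈ T.G)
    (h : ∀ P, IsSimpleFilling T P → ∃ P', IsSimpleFilling T' P' ∧ sigmaFill T' P' ≤ sigmaFill T P) :
    bmGenus T' ≤ bmGenus T := by
  obtain ⟨P₀, hP₀⟩ := exists_isSimpleFilling hs
  obtain ⟨P, hP, hPeq⟩ := Nat.sInf_mem (⟨_, P₀, hP₀, rfl⟩ :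
    {n | ∃ P, IsSimpleFilling T P ∧ n = sigmaFill T P}.Nonempty)
  obtain ⟨P', hP', hle⟩ := h P hP
  calc bmGenus T' ≤ sigmaFill T' P' := Nat.sInf_le ⟨P', hP', rfl⟩
    _ ≤ sigmaFill T P := hle
    _ = bmGenus T := hPeq.symm

/-- Covers `M₁` (`D = {g}`, row `0`), `M₂` (`D = {g}`, row of `s`) and `M₃` (`D = {g₁, g₂}`,
row of `s`). -/
structure IsElemExt (T T' : PreBM R) (D : Finset ℕ) : Prop where
  s_eq : T'.s = T.s
  disjoint : Disjoint D T.G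
  G_eq : T'.G = D ∪ T.G
  b_eq : ∀ x ∈ T.G, ∀ y ∈ T.G, T'.b x y = T.b x y
  card_le : D.card ≤ 2
  blockRow_mem : blockRow T' D ∈ R ∙ blockRow T' {T'.s}

namespace IsElemExt

variable {D : Finset ℕ} {P : Finset (Finset ℕ)}

theorem isSimpleFilling_insert (h : IsElemExt T T' D) (hP : IsSimpleFilling T P) :
    IsSimpleFilling T' (insert D P) := by
  refine ⟨?_, forall_mem_insert _ _ _ |>.2 ⟨h.card_le, hP.2.1⟩, ?_, ?_⟩
  · rw [h.s_eq]
    exact mem_insert_of_mem hP.1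
  · change ((insert D P : Finset _) : Set (Finset ℕ)).PairwiseDisjoint id
    rw [coe_insert]
    exact hP.pairwiseDisjoint.insert fun Y hY _ => h.disjoint.mono_right (hP.subset hY)
  · rw [biUnion_insert, hP.2.2.2, h.G_eq]
    rfl

theorem blockRow_mem_span_insert (h : IsElemExt T T' D) (hP : IsSimpleFilling T P) :
    ∀ X ∈ insert D P, blockRow T' X ∈ Submodule.span R (blockRow T' '' P) := by
  have hsP : {T'.s} ∈ P := h.s_eq ▸ hP.1
  refine forall_mem_insert _ _ _ |>.2 ⟨?_, fun X hX => ?_⟩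
  · exact Submodule.span_mono (by simpa using ⟨_, hsP, rfl⟩) h.blockRow_mem
  · exact Submodule.subset_span (Set.mem_image_of_mem _ hX)

theorem isSimpleFilling_mergeMeeting (h : IsElemExt T T' D) (hs : T.s ∈ T.G)
    (hP : IsSimpleFilling T' P) : IsSimpleFilling T (mergeMeeting P D) := by
  have hsD : T.s ∉ D := fun hsD => disjoint_left.1 h.disjoint hsD hs
  refine ⟨?_, ?_, ?_, ?_⟩
  · exact mem_insert_of_mem (mem_filter.2 ⟨h.s_eq ▸ hP.1, disjoint_singleton_left.2 hsD⟩)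
  · refine forall_mem_insert _ _ _ |>.2 ⟨?_, fun X hX => hP.2.1 X (mem_filter.1 hX).1⟩
    exact (card_biUnion_not_disjoint_sdiff_le hP.pairwiseDisjoint hP.2.1).trans h.card_le
  · change ((mergeMeeting P D : Finset _) : Set (Finset ℕ)).PairwiseDisjoint id
    rw [mergeMeeting, coe_insert]
    refine (hP.pairwiseDisjoint.subset (coe_subset.2 (filter_subset _ _))).insert
      fun Y hY _ => ((disjoint_biUnion_left _ _ _).2 fun X hX => ?_).mono_left sdiff_subset
    obtain ⟨hYP, hYD⟩ := mem_filter.1 hY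
    obtain ⟨hXP, hXD⟩ := mem_filter.1 hX
    exact hP.2.2.1 X hXP Y hYP fun hXY => hXD (hXY ▸ hYD)
  · have hG : T.G = P.biUnion id \ D := by
      rw [hP.2.2.2, h.G_eq, union_sdiff_cancel_left h.disjoint]
    rw [hG, mergeMeeting, biUnion_insert]
    ext a
    simp only [mem_union, mem_sdiff, mem_biUnion, mem_filter, id]
    constructor
    · rintro (⟨⟨X, ⟨hX, -⟩, haX⟩, haD⟩ | ⟨Y, ⟨hY, hYD⟩, haY⟩)
      · exact ⟨⟨X, hX, haX⟩, haD⟩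
      · exact ⟨⟨Y, hY, haY⟩, disjoint_left.1 hYD haY⟩
    · rintro ⟨⟨X, hX, haX⟩, haD⟩
      by_cases hXD : Disjoint X D
      · exact Or.inr ⟨X, ⟨hX, hXD⟩, haX⟩
      · exact Or.inl ⟨⟨X, ⟨hX, hXD⟩, haX⟩, haD⟩

theorem blockRow_mem_span_mergeMeeting (h : IsElemExt T T' D) (hP : IsSimpleFilling T' P) :
    ∀ X ∈ mergeMeeting P D, blockRow T' X ∈ Submodule.span R (blockRow T' '' P) := by
  set Q := P.filter (¬Disjoint · D)
  have hDQ : D ⊆ Q.biUnion id := by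
    intro d hd
    have hdP : d ∈ P.biUnion id := hP.2.2.2 ▸ h.G_eq ▸ mem_union_left _ hd
    obtain ⟨X, hX, hdX⟩ := mem_biUnion.1 hdP
    exact mem_biUnion.2 ⟨X, mem_filter.2 ⟨hX, not_disjoint_iff.2 ⟨d, hdX, hd⟩⟩, hdX⟩
  have hrow : ∀ X ∈ P, blockRow T' X ∈ Submodule.span R (blockRow T' '' P) :=
    fun X hX => Submodule.subset_span (Set.mem_image_of_mem _ hX)
  refine forall_mem_insert _ _ _ |>.2 ⟨?_, fun X hX => hrow X (mem_filter.1 hX).1⟩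
  rw [blockRow_sdiff T' hDQ,
    blockRow_biUnion T' (hP.pairwiseDisjoint.subset (coe_subset.2 (filter_subset _ _)))]
  exact sub_mem (sum_mem fun X hX => hrow X (mem_filter.1 hX).1)
    (Submodule.span_mono (by simpa using ⟨_, hP.1, rfl⟩) h.blockRow_mem)

theorem bmGenus_eq [Nontrivial R] (h : IsElemExt T T' D) (hs : T.s ∈ T.G) (hT' : IsBM T') :
    bmGenus T = bmGenus T' := by
  refine le_antisymm (bmGenus_le_of_forall_exists hT'.1 fun P' hP' => ?_)
    (bmGenus_le_of_forall_exists hs fun P hP => ?_)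
  · have hP := h.isSimpleFilling_mergeMeeting hs hP'
    refine ⟨_, hP, ?_⟩
    rw [← sigmaFill_congr h.b_eq fun X => hP.subset]
    refine sigmaFill_le_of_mem_span hT' (fun X => hP'.subset) (fun X hX => ?_)
      (h.blockRow_mem_span_mergeMeeting hP')
    exact (hP.subset hX).trans (h.G_eq ▸ subset_union_right)
  · have hP' := h.isSimpleFilling_insert hP
    refine ⟨_, hP', ?_⟩
    rw [← sigmaFill_congr h.b_eq fun X => hP.subset]
    exact sigmaFill_le_of_mem_span hT'
      (fun X hX => (hP.subset hX).trans (h.G_eq ▸ subset_union_right))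
      (fun X => hP'.subset) (h.blockRow_mem_span_insert hP)

end IsElemExt

theorem IsExt1.isElemExt (h : IsExt1 T T') : ∃ D, IsElemExt T T' D := by
  obtain ⟨hs, g, hg, hG, hb, hann⟩ := h
  refine ⟨{g}, hs, disjoint_singleton_left.2 hg, hG, hb, by simp, ?_⟩
  have : blockRow T' {g} = 0 := by
    ext w
    rw [blockRow, sum_singleton, Pi.zero_apply]
    exact Set.indicator_apply_eq_zero.2 (hann w)
  rw [this]
  exact zero_mem _

theorem IsExt2.isElemExt (h : IsExt2 T T') : ∃ D, IsElemExt T T' D := by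
  obtain ⟨hs, g, hg, hG, hb, hcore⟩ := h
  refine ⟨{g}, hs, disjoint_singleton_left.2 hg, hG, hb, by simp, ?_⟩
  have : blockRow T' {g} = blockRow T' {T'.s} := by
    simp only [blockRow, sum_singleton]
    exact Set.indicator_congr fun w hw => hcore w hw
  rw [this]
  exact Submodule.mem_span_singleton_self _

theorem IsExt3.isElemExt (h : IsExt3 T T') : ∃ D, IsElemExt T T' D := by
  obtain ⟨hs, g₁, g₂, hg₁, hg₂, hg, hG, hb, hpair⟩ := h
  refine ⟨{g₁, g₂}, hs, ?_, by rw [hG, insert_union, singleton_union], hb, card_le_two, ?_⟩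
  · simp [hg₁, hg₂]
  have : blockRow T' {g₁, g₂} = blockRow T' {T'.s} := by
    rw [blockRow, blockRow, sum_pair hg, sum_singleton, ← Set.indicator_add']
    exact Set.indicator_congr fun w hw => hpair w hw
  rw [this]
  exact Submodule.mem_span_singleton_self _

theorem sigmaFill_image {f : ℕ → ℕ} (hf : Set.InjOn f T.G)
    (hfb : ∀ g ∈ T.G, ∀ h ∈ T.G, T'.b (f g) (f h) = T.b g h) {P : Finset (Finset ℕ)}
    (hP : ∀ X ∈ P, X ⊆ T.G) : sigmaFill T' (P.image (Finset.image f)) = sigmaFill T P := by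
  have hbij : Set.BijOn (Finset.image f) P (P.image (Finset.image f)) := by
    rw [coe_image]
    exact ((image_injOn_powerset_of_injOn hf).mono fun X hX =>
      mem_powerset.2 (hP X hX)).bijOn_image
  have hb : ∀ X ∈ P, ∀ Y ∈ P, bSet T' (X.image f) (Y.image f) = bSet T X Y := by
    intro X hX Y hY
    rw [bSet, sum_image (hf.mono (hP X hX))]
    refine sum_congr rfl fun x hx => ?_
    rw [sum_image (hf.mono (hP Y hY))]
    exact sum_congr rfl fun y hy => hfb x (hP X hX hx) y (hP Y hY hy)
  unfold sigmaFill
  rw [← Matrix.rank_submatrix _ (hbij.equiv _) (hbij.equiv _)]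
  congr 2
  ext X Y
  exact hb X X.2 Y Y.2

theorem BMIso.bmGenus_le (hs : T.s ∈ T.G) (h : BMIso T T') : bmGenus T' ≤ bmGenus T := by
  obtain ⟨f, hf, hfs, hfb⟩ := h
  exact bmGenus_le_of_forall_exists hs fun P hP =>
    ⟨_, hP.image hf hfs, (sigmaFill_image hf.injOn hfb fun X => hP.subset).le⟩

theorem bmGenus_eq_of_step [Nontrivial R]
    (h : StepExt T T' ∨ (IsBM T ∧ IsBM T' ∧ BMIso T T')) : bmGenus T = bmGenus T' := by
  rcases h with ⟨hT, hT', hext⟩ | ⟨hT, hT', hiso⟩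
  · obtain ⟨D, hD⟩ : ∃ D, IsElemExt T T' D := by
      rcases hext with h | h | h
      exacts [h.isElemExt, h.isElemExt, h.isElemExt]
    exact hD.bmGenus_eq hT.1 hT'
  · exact le_antisymm ((hiso.symm hT.1).bmGenus_le hT'.1) (hiso.bmGenus_le hT.1)

theorem Homologous.bmGenus_eq [Nontrivial R] (h : Homologous T T') : bmGenus T = bmGenus T' :=
  (Setoid.ker (bmGenus (R := R))).iseqv.eqvGen_iff.1 (h.mono fun _ _ => bmGenus_eq_of_step)

end Genus

theorem bmGenus_primitive_and_hyperbolic {R : Type*} [CommRing R] [IsDomain R] :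
    (∀ T P : PreBM R, IsBM T → IsBM P → Primitive P → Homologous P T →
      bmGenus P = bmGenus T) ∧
    (∀ T T' : PreBM R, IsBM T → IsBM T' → Homologous T T' → Hyperbolic T' →
      Hyperbolic T) :=
  ⟨fun _ _ _ _ _ hPT => hPT.bmGenus_eq,
    fun _ _ _ _ hTT' hT' => hTT'.bmGenus_eq.trans hT'⟩
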